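/- Let α ∈ (0,1) and z ≥ 0, and suppose that for all θ ∈ (0, π/2) the inequality (cos(θ − π/4))^{2z} ≤ 2^{−(1−α)}((cos θ)^{2α} + (sin θ)^{2α}) holds. Then z ≥ 1 − α. -/

import Mathlib

/-!
Both sides of the hypothesis are continuous at `θ = π / 2`, so the inequality persists in the
limit. There the left side is `cos (π / 4) ^ (2 * z) = 2 ^ (-z)` and the right side is
`2 ^ (-(1 - α)) * (0 + 1)`, and `t ↦ 2 ^ t` is strictly increasing.
-/

open Real

theorem Real.cos_pi_div_four_rpow_two_mul (z : ℝ) :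
    cos (π / 4) ^ (2 * z) = (2 : ℝ) ^ (-z) := by
  have hsq : cos (π / 4) ^ (2 : ℝ) = 2⁻¹ := by
    rw [rpow_two, cos_pi_div_four, div_pow, sq_sqrt zero_le_two]
    norm_num
  rw [rpow_mul (by rw [cos_pi_div_four]; positivity), hsq, inv_rpow zero_le_two,
    rpow_neg zero_le_two]

theorem constraint_z_ge_one_sub_alpha_general
    (α z : ℝ) (hα : α ∈ Set.Ioo (0 : ℝ) 1)
    (h : ∀ θ ∈ Set.Ioo (0 : ℝ) (π / 2),
      (Real.cos (θ - π / 4)) ^ (2 * z) ≤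
        (2 : ℝ) ^ (-(1 - α)) * ((Real.cos θ) ^ (2 * α) + (Real.sin θ) ^ (2 * α))) :
    1 - α ≤ z := by
  have hα₀ : 0 < 2 * α := by linarith [hα.1]
  have hmem : π / 2 ∈ closure (Set.Ioo (0 : ℝ) (π / 2)) := by
    rw [closure_Ioo (by positivity)]
    exact Set.right_mem_Icc.mpr (by positivity)
  have hshift : π / 2 - π / 4 = π / 4 := by ring
  have hlhs : ContinuousAt (fun θ => cos (θ - π / 4) ^ (2 * z)) (π / 2) :=
    (continuous_cos.comp (continuous_sub_right _)).continuousAt.rpow_const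
      (Or.inl (by
        show cos (π / 2 - π / 4) ≠ 0
        rw [hshift, cos_pi_div_four]; positivity))
  have hrhs : ContinuousAt
      (fun θ => (2 : ℝ) ^ (-(1 - α)) * (cos θ ^ (2 * α) + sin θ ^ (2 * α))) (π / 2) :=
    continuousAt_const.mul ((continuous_cos.continuousAt.rpow_const (Or.inr hα₀.le)).add
      (continuous_sin.continuousAt.rpow_const (Or.inr hα₀.le)))
  have hlim := ContinuousWithinAt.closure_le hmem hlhs.continuousWithinAt
    hrhs.continuousWithinAt h
  simp only [hshift, cos_pi_div_four_rpow_two_mul, cos_pi_div_two, sin_pi_div_two,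
    zero_rpow hα₀.ne', one_rpow, zero_add, mul_one] at hlim
  linarith [(rpow_le_rpow_left_iff one_lt_two).mp hlim]

/-- Monotonicity constraint (with the states interchanged) forces `z ≥ 1 - α`. -/
theorem constraint_z_ge_one_sub_alpha
    (α z : ℝ) (hα : α ∈ Set.Ioo (0 : ℝ) 1) (hz : 0 ≤ z)
    (h : ∀ θ ∈ Set.Ioo (0 : ℝ) (π / 2),
      (Real.cos (θ - π / 4)) ^ (2 * z) ≤
        (2 : ℝ) ^ (-(1 - α)) * ((Real.cos θ) ^ (2 * α) + (Real.sin θ) ^ (2 * α))) :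
    1 - α ≤ z :=
  constraint_z_ge_one_sub_alpha_general α z hα h
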